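/- arXiv:2108.01134 — 7 statements merged into one kernel-verified Lean document; each statement's English description precedes it below -/
import Mathlib

section
/- Assume V is finite and |X| ≥ 3. If f is a collective choice rule (on the universal domain of profiles of transitive complete individual preferences) satisfying IIA and Pareto, and for every profile R the strict social preference P(f(R)) is negatively transitive, then there is a dictator for f. -/
/-- A profile assigns to each voter a transitive and complete preference relation. -/
structure Profile (V X : Type*) where
  rel : V → X → X → Prop
  total : ∀ i x y, rel i x y ∨ rel i y x
  trans : ∀ i x y z, rel i x y → rel i y z → rel i x z

/-- A collective choice rule maps profiles to binary relations on candidates. -/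
abbrev CCR (V X : Type*) := Profile V X → X → X → Prop

/-- Strict part of a relation. -/
def strictPref {X : Type*} (R : X → X → Prop) (x y : X) : Prop := R x y ∧ ¬ R y x

/-- The restriction of a profile to the pair {x,y}. -/
def Profile.restrict {V X : Type*} (R : Profile V X) (x y : X) : V → X → X → Prop :=
  fun i a b => (a = x ∨ a = y) ∧ (b = x ∨ b = y) ∧ R.rel i a b

/-- The preprofile obtained by removing the pairs ⟨x,y⟩ and ⟨y,x⟩ from every voter's relation. -/
def Profile.remove {V X : Type*} (R : Profile V X) (x y : X) : V → X → X → Prop :=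
  fun i a b => R.rel i a b ∧ ¬ ((a = x ∧ b = y) ∨ (a = y ∧ b = x))

/-- Majority margin of x over y in a preprofile. -/
noncomputable def marginOf {V X : Type*} (p : V → X → X → Prop) (x y : X) : ℤ :=
  (Nat.card {i : V // strictPref (p i) x y} : ℤ) -
    (Nat.card {i : V // strictPref (p i) y x} : ℤ)
/-! Geanakoplos' pivotal-voter proof of Arrow's theorem goes through using only that the strict
social preference `P` is transitive and negatively transitive.

If every voter ranks `b` first or last, so does society: otherwise there are `a ≠ c` with
`¬ b P a` and `¬ c P b`, and raising `c` above `a` for every voter keeps both facts (IIA), makes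
`c P a` (Pareto) and so contradicts negative transitivity. Let voters switch `b` from last to
first one at a time: some voter `i` flips `b` from socially last to socially first. Putting `b`
between `c` and `a` in `i`'s ranking gives `a P b P c` by IIA, hence `i` dictates every pair
avoiding `b`. Pivots for different candidates dictate common pairs, hence coincide, so `i` is a
dictator. -/

namespace Profile

variable {V X : Type*}

theorem ext {R R' : Profile V X} (h : R.rel = R'.rel) : R = R' := by
  cases R; cases R'; cases h; rfl

theorem rel_refl (R : Profile V X) (i : V) (x : X) : R.rel i x x :=
  (R.total i x x).elim id id

theorem restrict_comm (R : Profile V X) (x y : X) : R.restrict x y = R.restrict y x := by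
  funext i a b
  simp only [restrict, or_comm]

def ofScores (s : V → X → ℤ) : Profile V X where
  rel i x y := s i y ≤ s i x
  total i x y := le_total (s i y) (s i x)
  trans _ _ _ _ hxy hyz := hyz.trans hxy

@[simp]
theorem ofScores_rel (s : V → X → ℤ) (i : V) (x y : X) :
    (ofScores s).rel i x y ↔ s i y ≤ s i x :=
  Iff.rfl

@[simp]
theorem strictPref_ofScores (s : V → X → ℤ) (i : V) (x y : X) :
    strictPref ((ofScores s).rel i) x y ↔ s i y < s i x :=
  lt_iff_le_not_ge.symm

noncomputable def score (R : Profile V X) (i : V) (x : X) : ℤ :=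
  {y | R.rel i x y}.ncard

theorem rel_iff_score_le [Finite X] (R : Profile V X) (i : V) (x y : X) :
    R.rel i x y ↔ R.score i y ≤ R.score i x := by
  refine ⟨fun hxy => ?_, fun hle => ?_⟩
  · unfold score
    exact_mod_cast Set.ncard_le_ncard (fun z hz => R.trans i x y z hxy hz) (Set.toFinite _)
  · by_contra hxy
    have hyx : R.rel i y x := (R.total i x y).resolve_left hxy
    have hssub : {z | R.rel i x z} ⊂ {z | R.rel i y z} :=
      ⟨fun z hz => R.trans i y x z hyx hz, fun hsub => hxy (hsub (R.rel_refl i y))⟩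
    have hlt : R.score i x < R.score i y := by
      unfold score
      exact_mod_cast Set.ncard_lt_ncard hssub (Set.toFinite _)
    omega

theorem exists_eq_ofScores [Finite X] (R : Profile V X) : ∃ s, R = ofScores s :=
  ⟨R.score, ext <| by funext i x y; exact propext (R.rel_iff_score_le i x y)⟩

open Classical in
noncomputable def raise (b : X) (S : Set V) : Profile V X :=
  ofScores fun i x => if x = b then if i ∈ S then 1 else -1 else 0

theorem strictPref_raise_of_mem {b a : X} {S : Set V} {i : V} (hi : i ∈ S) (ha : a ≠ b) :
    strictPref ((raise b S).rel i) b a := by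
  simp [raise, ha, hi]

theorem strictPref_raise_of_notMem {b a : X} {S : Set V} {i : V} (hi : i ∉ S) (ha : a ≠ b) :
    strictPref ((raise b S).rel i) a b := by
  simp [raise, ha, hi]

end Profile

theorem strictPref.asymm {X : Type*} {r : X → X → Prop} {x y : X} (h : strictPref r x y) :
    ¬ strictPref r y x :=
  fun h' => h.2 h'.1

def IsStrictTop {X : Type*} (r : X → X → Prop) (b : X) : Prop := ∀ a, a ≠ b → strictPref r b a

def IsStrictBot {X : Type*} (r : X → X → Prop) (b : X) : Prop := ∀ a, a ≠ b → strictPref r a b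

theorem exists_ne_ne_of_three_le_natCard {X : Type*} [Finite X] (h3 : 3 ≤ Nat.card X) (a b : X) :
    ∃ c : X, c ≠ a ∧ c ≠ b :=
  ENat.exists_ne_ne_of_three_le (by rw [ENat.card_eq_coe_natCard]; exact_mod_cast h3) a b

namespace CCR

variable {V X : Type*}

def IIA (f : CCR V X) : Prop :=
  ∀ (x y : X) (R R' : Profile V X), R.restrict x y = R'.restrict x y → (f R x y ↔ f R' x y)

def Pareto (f : CCR V X) : Prop :=
  ∀ (x y : X) (R : Profile V X), (∀ i, strictPref (R.rel i) x y) → strictPref (f R) x y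

def StrictNegTrans (f : CCR V X) : Prop :=
  ∀ (R : Profile V X) (x y z : X),
    ¬ strictPref (f R) x y → ¬ strictPref (f R) y z → ¬ strictPref (f R) x z

def Dictates (f : CCR V X) (i : V) (x y : X) : Prop :=
  ∀ R : Profile V X, strictPref (R.rel i) x y → strictPref (f R) x y

structure IsPivot (f : CCR V X) (b : X) (i : V) (S : Set V) : Prop where
  notMem : i ∉ S
  isStrictBot : IsStrictBot (f (Profile.raise b S)) b
  isStrictTop : IsStrictTop (f (Profile.raise b (insert i S))) b

variable {f : CCR V X}

theorem StrictNegTrans.trans (hf : f.StrictNegTrans) (R : Profile V X) {x y z : X}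
    (hxy : strictPref (f R) x y) (hyz : strictPref (f R) y z) : strictPref (f R) x z :=
  not_not.1 fun hxz => hf R x z y hxz hyz.asymm hxy

theorem IIA.strictPref_congr (hf : f.IIA) {R R' : Profile V X} {x y : X}
    (h : ∀ i, (R.rel i x y ↔ R'.rel i x y) ∧ (R.rel i y x ↔ R'.rel i y x)) :
    strictPref (f R) x y ↔ strictPref (f R') x y := by
  have hxy : R.restrict x y = R'.restrict x y := by
    funext i a b
    simp only [Profile.restrict]
    refine propext ⟨fun ⟨ha, hb, hab⟩ => ⟨ha, hb, ?_⟩, fun ⟨ha, hb, hab⟩ => ⟨ha, hb, ?_⟩⟩ <;>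
      rcases ha with rfl | rfl <;> rcases hb with rfl | rfl <;>
      simp_all [Profile.rel_refl]
  have hyx : R.restrict y x = R'.restrict y x := by
    rw [R.restrict_comm, R'.restrict_comm, hxy]
  rw [strictPref, strictPref, hf x y R R' hxy, hf y x R R' hyx]

theorem IIA.strictPref_congr_of_strictPref (hf : f.IIA) {R R' : Profile V X} {x y : X}
    (h : ∀ i, (strictPref (R.rel i) x y ∧ strictPref (R'.rel i) x y) ∨
      (strictPref (R.rel i) y x ∧ strictPref (R'.rel i) y x)) :
    strictPref (f R) x y ↔ strictPref (f R') x y :=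
  hf.strictPref_congr fun i => by
    rcases h i with ⟨⟨h1, h2⟩, ⟨h3, h4⟩⟩ | ⟨⟨h1, h2⟩, ⟨h3, h4⟩⟩ <;> tauto

theorem strictPref_or_strictPref_of_forall (hIIA : f.IIA) (hPar : f.Pareto)
    (hNT : f.StrictNegTrans) {R : Profile V X} {b : X}
    (hR : ∀ i, IsStrictTop (R.rel i) b ∨ IsStrictBot (R.rel i) b)
    {a c : X} (ha : a ≠ b) (hc : c ≠ b) (hac : a ≠ c) :
    strictPref (f R) b a ∨ strictPref (f R) c b := by
  classical
  by_contra! h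
  -- Raise `c` above `a` for every voter, keeping `b` where it was.
  let t : V → X → ℤ := fun i x =>
    if x = b then (if IsStrictTop (R.rel i) b then 3 else -3)
    else if x = c then 2 else if x = a then 1 else 0
  have hsame : ∀ z, z ≠ b → ∀ i,
      (strictPref (R.rel i) b z ∧ strictPref ((Profile.ofScores t).rel i) b z) ∨
      (strictPref (R.rel i) z b ∧ strictPref ((Profile.ofScores t).rel i) z b) := by
    intro z hz i
    have hbound : -3 < t i z ∧ t i z < 3 := by
      simp only [t, if_neg hz]
      split_ifs <;> omega
    simp only [Profile.strictPref_ofScores]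
    rcases hR i with htop | hbot
    · have hb : t i b = 3 := by simp [t, htop]
      exact Or.inl ⟨htop z hz, by omega⟩
    · have hntop : ¬ IsStrictTop (R.rel i) b := fun htop => (hbot z hz).asymm (htop z hz)
      have hb : t i b = -3 := by simp [t, hntop]
      exact Or.inr ⟨hbot z hz, by omega⟩
  have hba : ¬ strictPref (f (Profile.ofScores t)) b a :=
    (hIIA.strictPref_congr_of_strictPref (hsame a ha)).not.1 h.1
  have hcb : ¬ strictPref (f (Profile.ofScores t)) c b :=
    (hIIA.strictPref_congr_of_strictPref fun i => (hsame c hc i).symm).not.1 h.2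
  exact hNT _ c b a hcb hba (hPar c a _ fun i => by simp [t, ha, hc, hac])

theorem isStrictTop_or_isStrictBot_of_forall [Finite X] (hIIA : f.IIA) (hPar : f.Pareto)
    (hNT : f.StrictNegTrans) (h3 : 3 ≤ Nat.card X) {R : Profile V X} {b : X}
    (hR : ∀ i, IsStrictTop (R.rel i) b ∨ IsStrictBot (R.rel i) b) :
    IsStrictTop (f R) b ∨ IsStrictBot (f R) b := by
  by_contra! h
  simp only [IsStrictTop, IsStrictBot, not_forall] at h
  obtain ⟨⟨a, ha, hba⟩, ⟨c, hc, hcb⟩⟩ := h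
  obtain rfl | hac := eq_or_ne a c
  · obtain ⟨d, hda, hdb⟩ := exists_ne_ne_of_three_le_natCard h3 a b
    by_cases hbd : strictPref (f R) b d
    · exact (strictPref_or_strictPref_of_forall hIIA hPar hNT hR ha hdb hda.symm).elim
        hba hbd.asymm
    · exact (strictPref_or_strictPref_of_forall hIIA hPar hNT hR hdb ha hda).elim hbd hcb
  · exact (strictPref_or_strictPref_of_forall hIIA hPar hNT hR ha hc hac).elim hba hcb

theorem exists_isPivot [Finite V] [Finite X] (hIIA : f.IIA) (hPar : f.Pareto)
    (hNT : f.StrictNegTrans) (h3 : 3 ≤ Nat.card X) (b : X) :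
    ∃ (i : V) (S : Set V), f.IsPivot b i S := by
  have htop_or_bot : ∀ S : Set V, IsStrictTop (f (Profile.raise b S)) b ∨
      IsStrictBot (f (Profile.raise b S)) b := fun S =>
    isStrictTop_or_isStrictBot_of_forall hIIA hPar hNT h3 fun i => by
      by_cases hi : i ∈ S
      · exact Or.inl fun a ha => Profile.strictPref_raise_of_mem hi ha
      · exact Or.inr fun a ha => Profile.strictPref_raise_of_notMem hi ha
  obtain ⟨a, -, hab⟩ := exists_ne_ne_of_three_le_natCard h3 b b
  have hbot_empty : IsStrictBot (f (Profile.raise b (∅ : Set V))) b := fun a ha =>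
    hPar a b _ fun i => Profile.strictPref_raise_of_notMem (Set.notMem_empty i) ha
  have htop_univ : IsStrictTop (f (Profile.raise b (Set.univ : Set V))) b := fun a ha =>
    hPar b a _ fun i => Profile.strictPref_raise_of_mem (Set.mem_univ i) ha
  -- A maximal coalition keeping `b` socially last; one more voter must make it socially first.
  obtain ⟨S, hSbot, hSmax⟩ :=
    (Set.toFinite {S : Set V | IsStrictBot (f (Profile.raise b S)) b}).exists_maximal
      ⟨∅, hbot_empty⟩
  obtain ⟨i, hi⟩ := Set.ne_univ_iff_exists_notMem S |>.1 fun hS =>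
    (htop_univ a hab).asymm (hS ▸ hSbot a hab)
  refine ⟨i, S, hi, hSbot, (htop_or_bot _).resolve_right fun hbot => hi ?_⟩
  exact hSmax hbot (Set.subset_insert i S) (Set.mem_insert i S)

theorem IsPivot.dictates_of_ne [Finite V] [Finite X] (hIIA : f.IIA) (hNT : f.StrictNegTrans)
    {b : X} {i : V} {S : Set V} (hp : f.IsPivot b i S) {a c : X} (ha : a ≠ b) (hc : c ≠ b) :
    f.Dictates i a c := by
  classical
  intro R hac
  obtain ⟨s, rfl⟩ := R.exists_eq_ofScores
  rw [Profile.strictPref_ofScores] at hac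
  obtain ⟨N, hN⟩ := (Set.finite_range fun p : V × X => |s p.1 p.2|).bddAbove
  have hbound : ∀ v x, -N ≤ s v x ∧ s v x ≤ N := fun v x => abs_le.1 (hN ⟨(v, x), rfl⟩)
  -- Put `b` first for `S`, last outside `insert i S`, and strictly between `c` and `a` for `i`;
  -- doubling the scores makes room for the latter.
  let t : V → X → ℤ := fun v =>
    Function.update (fun x => 2 * s v x) b
      (if v ∈ S then 2 * N + 1 else if v = i then 2 * s i c + 1 else -2 * N - 1)
  have ht : ∀ v x, x ≠ b → t v x = 2 * s v x := fun v x hx => Function.update_of_ne hx _ _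
  have htb : ∀ v, t v b =
      if v ∈ S then 2 * N + 1 else if v = i then 2 * s i c + 1 else -2 * N - 1 :=
    fun v => Function.update_self _ _ _
  have hab : strictPref (f (Profile.ofScores t)) a b := by
    refine (hIIA.strictPref_congr_of_strictPref fun v => ?_).1 (hp.isStrictBot a ha)
    simp only [Profile.strictPref_ofScores, ht v a ha, htb]
    have := hbound v a
    by_cases hv : v ∈ S
    · exact Or.inr ⟨Profile.strictPref_raise_of_mem hv ha, by simp only [hv, if_true]; omega⟩
    · refine Or.inl ⟨Profile.strictPref_raise_of_notMem hv ha, ?_⟩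
      simp only [hv, if_false]
      split_ifs with hvi
      · subst hvi; omega
      · omega
  have hbc : strictPref (f (Profile.ofScores t)) b c := by
    refine (hIIA.strictPref_congr_of_strictPref fun v => ?_).1 (hp.isStrictTop c hc)
    simp only [Profile.strictPref_ofScores, ht v c hc, htb]
    have := hbound v c
    by_cases hv : v ∈ insert i S
    · refine Or.inl ⟨Profile.strictPref_raise_of_mem hv hc, ?_⟩
      rcases Set.mem_insert_iff.1 hv with rfl | hvS
      · simp only [hp.notMem, if_false, if_true]; omega
      · simp only [hvS, if_true]; omega
    · have hvS : v ∉ S := fun h => hv (Set.mem_insert_of_mem i h)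
      have hvi : v ≠ i := fun h => hv (h ▸ Set.mem_insert i S)
      refine Or.inr ⟨Profile.strictPref_raise_of_notMem hv hc, ?_⟩
      simp only [hvS, hvi, if_false]; omega
  refine (hIIA.strictPref_congr fun v => ?_).1 (hNT.trans _ hab hbc)
  simp only [Profile.ofScores_rel, ht v a ha, ht v c hc]
  omega

theorem IsPivot.eq_of_dictates {b a : X} {i j : V} {S : Set V} (hp : f.IsPivot b i S)
    (ha : a ≠ b) (hjab : f.Dictates j a b) (hjba : f.Dictates j b a) : j = i := by
  by_contra hji
  by_cases hj : j ∈ S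
  · exact (hp.isStrictBot a ha).asymm (hjba _ (Profile.strictPref_raise_of_mem hj ha))
  · have hj' : j ∉ insert i S := by simp [hj, hji]
    exact (hp.isStrictTop a ha).asymm (hjab _ (Profile.strictPref_raise_of_notMem hj' ha))

theorem IsPivot.dictates [Finite V] [Finite X] (hIIA : f.IIA) (hPar : f.Pareto)
    (hNT : f.StrictNegTrans) (h3 : 3 ≤ Nat.card X) {b : X} {i : V} {S : Set V}
    (hp : f.IsPivot b i S) (x y : X) : f.Dictates i x y := by
  obtain ⟨e, hex, hey⟩ := exists_ne_ne_of_three_le_natCard h3 x y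
  obtain rfl | heb := eq_or_ne e b
  · exact hp.dictates_of_ne hIIA hNT hex.symm hey.symm
  obtain ⟨j, T, hq⟩ := exists_isPivot hIIA hPar hNT h3 e
  obtain ⟨a, hab, hae⟩ := exists_ne_ne_of_three_le_natCard h3 b e
  obtain rfl : j = i := hp.eq_of_dictates hab (hq.dictates_of_ne hIIA hNT hae heb.symm)
    (hq.dictates_of_ne hIIA hNT heb.symm hae)
  exact hq.dictates_of_ne hIIA hNT hex.symm hey.symm

end CCR

theorem arrow_negatively_transitive_general {V X : Type*} [Finite V] [Finite X]
    (h3 : 3 ≤ Nat.card X) (f : CCR V X)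
    (hIIA : ∀ (x y : X) (R R' : Profile V X), R.restrict x y = R'.restrict x y →
      (f R x y ↔ f R' x y))
    (hPareto : ∀ (x y : X) (R : Profile V X),
      (∀ i, strictPref (R.rel i) x y) → strictPref (f R) x y)
    (hnegtrans : ∀ (R : Profile V X) (x y z : X),
      ¬ strictPref (f R) x y → ¬ strictPref (f R) y z → ¬ strictPref (f R) x z) :
    ∃ i : V, ∀ (x y : X) (R : Profile V X),
      strictPref (R.rel i) x y → strictPref (f R) x y := by
  obtain ⟨b⟩ : Nonempty X := (Nat.card_pos_iff.1 (by omega)).1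
  obtain ⟨i, S, hp⟩ := CCR.exists_isPivot hIIA hPareto hnegtrans h3 b
  exact ⟨i, hp.dictates hIIA hPareto hnegtrans h3⟩

/-- Strengthened Arrow: IIA + Pareto + negative transitivity of strict social preference
implies a dictator. -/
theorem arrow_negatively_transitive {V X : Type*} [Finite V] [Finite X]
    [Nonempty V] [Nonempty X] (h3 : 3 ≤ Nat.card X) (f : CCR V X)
    (hIIA : ∀ (x y : X) (R R' : Profile V X), R.restrict x y = R'.restrict x y →
      (f R x y ↔ f R' x y))
    (hPareto : ∀ (x y : X) (R : Profile V X),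
      (∀ i, strictPref (R.rel i) x y) → strictPref (f R) x y)
    (hnegtrans : ∀ (R : Profile V X) (x y z : X),
      ¬ strictPref (f R) x y → ¬ strictPref (f R) y z → ¬ strictPref (f R) x z) :
    ∃ i : V, ∀ (x y : X) (R : Profile V X),
      strictPref (R.rel i) x y → strictPref (f R) x y :=
  arrow_negatively_transitive_general h3 f hIIA hPareto hnegtrans
end

section
/- If a collective choice rule f is advantage-standard rationalizable, then f satisfies weak IIA: for all x,y and profiles R, R' agreeing on {x,y}, xP(f(R))y implies not yP(f(R'))x. -/
/-- A totally ordered group structure on G. -/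
structure TOGroupStr (G : Type) where
  mul : G → G → G
  one : G
  inv : G → G
  le : G → G → Prop
  mul_assoc : ∀ a b c, mul (mul a b) c = mul a (mul b c)
  one_mul : ∀ a, mul one a = a
  mul_one : ∀ a, mul a one = a
  inv_mul_cancel : ∀ a, mul (inv a) a = one
  mul_inv_cancel : ∀ a, mul a (inv a) = one
  le_refl : ∀ a, le a a
  le_trans : ∀ a b c, le a b → le b c → le a c
  le_antisymm : ∀ a b, le a b → le b a → a = b
  le_total : ∀ a b, le a b ∨ le b a
  mul_le_mul_left : ∀ a b c, le a b → le (mul c a) (mul c b)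
  mul_le_mul_right : ∀ a b c, le a b → le (mul a c) (mul b c)

/-- Strict order of a totally ordered group structure. -/
def TOGroupStr.lt {G : Type} (S : TOGroupStr G) (a b : G) : Prop := S.le a b ∧ a ≠ b

/-- A CCR is advantage-standard rationalizable if there are a totally ordered group and
advantage/standard functions such that strict social preference holds exactly when the
advantage exceeds the standard. -/
def ASRationalizable {V X : Type*} (f : CCR V X) : Prop :=
  ∃ (G : Type) (S : TOGroupStr G)
    (Adv : X → X → (V → X → X → Prop) → G)
    (Std : X → X → (V → X → X → Prop) → G),
    (∀ (x y : X) (R : Profile V X),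
        Adv x y (R.restrict x y) = S.inv (Adv y x (R.restrict x y))) ∧
    (∀ (x y : X) (R : Profile V X), S.le S.one (Std x y (R.remove x y))) ∧
    (∀ (x y : X) (R : Profile V X),
        strictPref (f R) x y ↔ S.lt (Std x y (R.remove x y)) (Adv x y (R.restrict x y)))
/-- Weak IIA: two profiles alike on {x,y} cannot have opposite strict social preferences. -/
def WeakIIA {V X : Type*} (f : CCR V X) : Prop :=
  ∀ (x y : X) (R R' : Profile V X), R.restrict x y = R'.restrict x y →
    strictPref (f R) x y → ¬ strictPref (f R') y x

/-! If `x` beats `y` at `R` and `y` beats `x` at `R'`, both advantages exceed a standard that is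
at least `e`, so the advantages of `x` over `y` and of `y` over `x` on the common restriction are
both above `e`; but they are inverse to each other. -/

namespace TOGroupStr

variable {G : Type} (S : TOGroupStr G) {a b c : G}

theorem lt_of_le_of_lt (hab : S.le a b) (hbc : S.lt b c) : S.lt a c := by
  refine ⟨S.le_trans a b c hab hbc.1, ?_⟩
  rintro rfl
  exact hbc.2 (S.le_antisymm b a hbc.1 hab)

theorem lt_asymm (hab : S.lt a b) : ¬ S.lt b a := fun hba =>
  hab.2 (S.le_antisymm a b hab.1 hba.1)

theorem eq_one_of_inv_eq_one (h : S.inv a = S.one) : a = S.one := by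
  simpa only [h, S.mul_one] using S.mul_inv_cancel a

theorem inv_lt_one_of_one_lt (h : S.lt S.one a) : S.lt (S.inv a) S.one := by
  refine ⟨?_, fun hinv => h.2 (S.eq_one_of_inv_eq_one hinv).symm⟩
  simpa only [S.mul_one, S.inv_mul_cancel] using S.mul_le_mul_left S.one a (S.inv a) h.1

end TOGroupStr

theorem Profile.restrict_comm_s5 {V X : Type*} (R : Profile V X) (x y : X) :
    R.restrict y x = R.restrict x y := by
  funext i a b
  simp only [Profile.restrict, or_comm]

/-- AS rationalizability implies weak IIA. -/
theorem as_rationalizable_implies_weakIIA {V X : Type*} (f : CCR V X)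
    (h : ASRationalizable f) : WeakIIA f := by
  obtain ⟨G, S, Adv, Std, hAdv, hStd, hIff⟩ := h
  intro x y R R' hagree hxy hyx
  have hxy_adv : S.lt S.one (Adv x y (R.restrict x y)) :=
    S.lt_of_le_of_lt (hStd x y R) ((hIff x y R).mp hxy)
  have hyx_adv : S.lt S.one (Adv y x (R.restrict x y)) := by
    have := S.lt_of_le_of_lt (hStd y x R') ((hIff y x R').mp hyx)
    rwa [R'.restrict_comm_s5, ← hagree] at this
  rw [hAdv x y R] at hxy_adv
  exact S.lt_asymm (S.inv_lt_one_of_one_lt hyx_adv) hxy_adv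
end

section
/- If a collective choice rule f is advantage-standard rationalizable, then f is AS rationalizable with advantage and standard functions taking values in the totally ordered group of integers under addition. -/
/-! Since `X` and `V` are finite, the advantage and standard functions take only finitely many
values. Close this set of values under inversion to a finite set `A`; the signed rank
`#{b ∈ A | b < a} - #{b ∈ A | a < b}` is strictly monotone on `A`, and it is odd because
inversion reverses the order and preserves `A`. Composing the advantage and standard functions
with it yields integer-valued ones. -/

open Finset Pointwise

namespace Finset

section Preorder

variable {α : Type*} [Preorder α] [DecidableLT α]

def signedRank (A : Finset α) (a : α) : ℤ :=
  #{b ∈ A | b < a} - #{b ∈ A | a < b}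

theorem signedRank_strictMonoOn (A : Finset α) : StrictMonoOn A.signedRank A := by
  intro a ha b hb hab
  have below : #{c ∈ A | c < a} < #{c ∈ A | c < b} := by
    refine card_lt_card ((ssubset_iff_of_subset fun c hc => ?_).2 ⟨a, ?_, ?_⟩)
    · simp only [mem_filter] at hc ⊢
      exact ⟨hc.1, hc.2.trans hab⟩
    · simpa [hab] using ha
    · simp
  have above : #{c ∈ A | b < c} < #{c ∈ A | a < c} := by
    refine card_lt_card ((ssubset_iff_of_subset fun c hc => ?_).2 ⟨b, ?_, ?_⟩)
    · simp only [mem_filter] at hc ⊢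
      exact ⟨hc.1, hab.trans hc.2⟩
    · simpa [hab] using hb
    · simp
  unfold signedRank
  omega

end Preorder

section OrderedGroup

variable {G : Type*} [Group G] [PartialOrder G] [DecidableLT G] [MulLeftMono G] [MulRightMono G]
  {A : Finset G}

theorem signedRank_inv (hA : ∀ a ∈ A, a⁻¹ ∈ A) (a : G) :
    A.signedRank a⁻¹ = -A.signedRank a := by
  have lt_inv_card (c : G) : #{b ∈ A | b < c⁻¹} = #{b ∈ A | c < b} := by
    refine card_nbij' (·⁻¹) (·⁻¹) ?_ ?_ (fun b _ => inv_inv b) (fun b _ => inv_inv b) <;>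
    · intro b hb
      simp only [coe_filter, Set.mem_ofPred_eq] at hb ⊢
      exact ⟨hA b hb.1, by simpa [lt_inv', inv_lt'] using hb.2⟩
  have inv_lt_card := lt_inv_card a⁻¹
  rw [inv_inv] at inv_lt_card
  rw [signedRank, signedRank, lt_inv_card, ← inv_lt_card]
  ring

theorem signedRank_nonneg_of_one_le (hA : ∀ a ∈ A, a⁻¹ ∈ A) {a : G} (ha : a ∈ A)
    (h : 1 ≤ a) : 0 ≤ A.signedRank a := by
  have := A.signedRank_strictMonoOn.monotoneOn (hA a ha) ha (Left.inv_le_self h)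
  rw [signedRank_inv hA] at this
  omega

end OrderedGroup

end Finset

namespace TOGroupStr

variable {G : Type} (S : TOGroupStr G)

abbrev toGroup : Group G where
  mul := S.mul
  one := S.one
  inv := S.inv
  mul_assoc := S.mul_assoc
  one_mul := S.one_mul
  mul_one := S.mul_one
  inv_mul_cancel := S.inv_mul_cancel

/-- `lt` is taken to be `S.lt`, so that `S.lt a b` and `a < b` agree definitionally. -/
noncomputable abbrev toLinearOrder : LinearOrder G where
  le := S.le
  lt := S.lt
  le_refl := S.le_refl
  le_trans := S.le_trans
  le_antisymm := S.le_antisymm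
  le_total := S.le_total
  lt_iff_le_not_ge a b :=
    ⟨fun h => ⟨h.1, fun h' => h.2 (S.le_antisymm a b h.1 h')⟩,
      fun h => ⟨h.1, fun e => h.2 (e ▸ S.le_refl a)⟩⟩
  toDecidableLE := Classical.decRel _

theorem exists_odd_strictMonoOn_int {B : Set G} (hB : B.Finite) :
    ∃ φ : G → ℤ, (∀ a ∈ B, ∀ b ∈ B, S.lt a b ↔ φ a < φ b) ∧
      (∀ a ∈ B, S.le S.one a → 0 ≤ φ a) ∧ ∀ a, φ (S.inv a) = -φ a := by
  let _ := S.toGroup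
  let _ := S.toLinearOrder
  have : MulLeftMono G := ⟨fun c _ _ h => S.mul_le_mul_left _ _ c h⟩
  have : MulRightMono G := ⟨fun c _ _ h => S.mul_le_mul_right _ _ c h⟩
  set A := (hB.union hB.inv).toFinset
  have mem_A {a : G} (ha : a ∈ B) : a ∈ A := by simp [A, ha]
  have inv_mem_A : ∀ a ∈ A, a⁻¹ ∈ A := by
    intro a ha
    simp only [A, Set.Finite.mem_toFinset, Set.mem_union, Set.mem_inv, inv_inv] at ha ⊢
    exact ha.symm
  refine ⟨A.signedRank, fun a ha b hb => ?_, fun a ha h => ?_, A.signedRank_inv inv_mem_A⟩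
  · exact (A.signedRank_strictMonoOn.lt_iff_lt (mem_A ha) (mem_A hb)).symm
  · exact A.signedRank_nonneg_of_one_le inv_mem_A (mem_A ha) h

end TOGroupStr

/-- If a CCR is AS rationalizable, then it is AS rationalizable with integer-valued
advantage and standard functions (the integers with addition and the usual order). -/
theorem as_rationalizable_int {V X : Type*} [Finite V] [Finite X] (f : CCR V X)
    (h : ASRationalizable f) :
    ∃ (Adv : X → X → (V → X → X → Prop) → ℤ)
      (Std : X → X → (V → X → X → Prop) → ℤ),
      (∀ (x y : X) (R : Profile V X),
          Adv x y (R.restrict x y) = - Adv y x (R.restrict x y)) ∧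
      (∀ (x y : X) (R : Profile V X), 0 ≤ Std x y (R.remove x y)) ∧
      (∀ (x y : X) (R : Profile V X),
          strictPref (f R) x y ↔ Std x y (R.remove x y) < Adv x y (R.restrict x y)) := by
  obtain ⟨G, S, Adv, Std, hAdv, hStd, hIff⟩ := h
  let B : Set G := (Set.range fun t : X × X × (V → X → X → Prop) => Adv t.1 t.2.1 t.2.2) ∪
    Set.range fun t : X × X × (V → X → X → Prop) => Std t.1 t.2.1 t.2.2
  have adv_mem (x y p) : Adv x y p ∈ B := Or.inl ⟨(x, y, p), rfl⟩
  have std_mem (x y p) : Std x y p ∈ B := Or.inr ⟨(x, y, p), rfl⟩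
  obtain ⟨φ, hlt, hnonneg, hodd⟩ :=
    S.exists_odd_strictMonoOn_int ((Set.finite_range _).union (Set.finite_range _) : B.Finite)
  exact ⟨fun x y p => φ (Adv x y p), fun x y p => φ (Std x y p),
    fun x y R => (congrArg φ (hAdv x y R)).trans (hodd _),
    fun x y R => hnonneg _ (std_mem ..) (hStd x y R),
    fun x y R => (hIff x y R).trans (hlt _ (std_mem ..) _ (adv_mem ..))⟩
end

section
/- Assume |V| ≥ 2 and |X| ≥ 3. The Copeland CCR (defined by xf(R)y iff the Copeland score of x in R is at least that of y) is a social welfare function (transitive and complete) satisfying anonymity, neutrality, Pareto, and orderability, but it does not satisfy weak IIA. -/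
/-- The set of restricted {x,y}-profiles for which some extending profile yields a strict
social preference of x over y. -/
def PPlus {V X : Type*} (f : CCR V X) (x y : X) : Set (V → X → X → Prop) :=
  {Q | ∃ R : Profile V X, R.restrict x y = Q ∧ strictPref (f R) x y}

/-- Orderability of a CCR. -/
def Orderable {V X : Type*} (f : CCR V X) : Prop :=
  ∀ x y : X, ∃ lq : (V → X → X → Prop) → (V → X → X → Prop) → Prop,
    (∀ Q₁ ∈ PPlus f x y, ∀ Q₂ ∈ PPlus f x y, ∀ Q₃ ∈ PPlus f x y,
        lq Q₁ Q₂ → lq Q₂ Q₃ → lq Q₁ Q₃) ∧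
    (∀ Q₁ ∈ PPlus f x y, ∀ Q₂ ∈ PPlus f x y, lq Q₁ Q₂ ∨ lq Q₂ Q₁) ∧
    (∀ R₁ R₂ : Profile V X, lq (R₁.restrict x y) (R₂.restrict x y) →
        R₁.remove x y = R₂.remove x y →
        strictPref (f R₁) x y → strictPref (f R₂) x y)

/-- Copeland score of a candidate. -/
noncomputable def copelandScore {V X : Type*} (R : Profile V X) (x : X) : ℤ :=
  (Nat.card {y : X // 0 < marginOf R.rel x y} : ℤ) -
    (Nat.card {y : X // 0 < marginOf R.rel y x} : ℤ)

/-- The Copeland CCR. -/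
noncomputable def copeland (V X : Type*) : CCR V X :=
  fun R x y => copelandScore R y ≤ copelandScore R x

/-- Permuting the voters of a profile. -/
def Profile.permVoters {V X : Type*} (R : Profile V X) (τ : Equiv.Perm V) : Profile V X :=
  ⟨fun i => R.rel (τ i), fun i => R.total (τ i), fun i => R.trans (τ i)⟩

/-- Permuting the candidates of a profile. -/
def Profile.permCands {V X : Type*} (R : Profile V X) (π : Equiv.Perm X) : Profile V X :=
  ⟨fun i a b => R.rel i (π.symm a) (π.symm b),
   fun i a b => R.total i (π.symm a) (π.symm b),
   fun i a b c h1 h2 => R.trans i _ _ _ h1 h2⟩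

/-!
Copeland scores are sums of signs of majority margins, `score x = ∑ z, sign (margin x z)`, so
`score x - score y = 2 * sign (margin x y) + ∑ z ∉ {x, y}, (sign (margin x z) - sign (margin y z))`.
The sum does not involve the pair `{x, y}`, which gives orderability (order restricted profiles by
the margin of `x` over `y`), and Pareto makes every term nonnegative and the first one `2`.
Weak IIA fails because when `margin a b = 0` the comparison of `a` and `b` is decided by a third
candidate `c`, which can be moved without changing anybody's view of `a` against `b`.
-/

theorem Int.sign_mono : Monotone Int.sign := by
  intro a b hab
  rcases lt_trichotomy a 0 with ha | rfl | ha <;> rcases lt_trichotomy b 0 with hb | rfl | hb <;>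
    simp [Int.sign_eq_one_of_pos, Int.sign_eq_neg_one_of_neg, *] <;> omega

theorem Int.sign_eq_ite (a : ℤ) :
    a.sign = (if 0 < a then 1 else 0) - (if a < 0 then 1 else 0) := by
  rcases lt_trichotomy a 0 with ha | rfl | ha
  · simp [Int.sign_eq_neg_one_of_neg ha, ha, ha.not_gt]
  · simp
  · simp [Int.sign_eq_one_of_pos ha, ha, ha.not_gt]

section Margins

variable {V X : Type*}

theorem strictPref_trans (R : Profile V X) (i : V) {x y z : X}
    (hxy : strictPref (R.rel i) x y) (hyz : strictPref (R.rel i) y z) :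
    strictPref (R.rel i) x z :=
  ⟨R.trans i x y z hxy.1 hyz.1, fun hzx => hyz.2 (R.trans i z x y hzx hxy.1)⟩

theorem marginOf_swap (p : V → X → X → Prop) (x y : X) :
    marginOf p y x = -marginOf p x y := by
  unfold marginOf
  ring

theorem marginOf_self (p : V → X → X → Prop) (x : X) : marginOf p x x = 0 := by
  simp [marginOf]

open Classical in
theorem marginOf_eq_sum [Fintype V] (p : V → X → X → Prop) (x y : X) :
    marginOf p x y =
      ∑ i, ((if strictPref (p i) x y then 1 else 0) - (if strictPref (p i) y x then 1 else 0)) := by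
  simp only [marginOf, Nat.card_eq_fintype_card, Fintype.card_subtype, Finset.natCast_card_filter,
    Finset.sum_sub_distrib]

theorem marginOf_permVoters (R : Profile V X) (τ : Equiv.Perm V) (x y : X) :
    marginOf (R.permVoters τ).rel x y = marginOf R.rel x y := by
  unfold marginOf
  congr 2 <;> exact Nat.card_congr (Equiv.subtypeEquiv τ fun _ => Iff.rfl)

theorem marginOf_permCands (R : Profile V X) (π : Equiv.Perm X) (x y : X) :
    marginOf (R.permCands π).rel (π x) (π y) = marginOf R.rel x y := by
  simp [marginOf, strictPref, Profile.permCands]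

theorem marginOf_restrict (R : Profile V X) (x y : X) :
    marginOf (R.restrict x y) x y = marginOf R.rel x y := by
  simp [marginOf, strictPref, Profile.restrict]

theorem marginOf_eq_of_remove_eq {R₁ R₂ : Profile V X} {x y : X}
    (h : R₁.remove x y = R₂.remove x y) {a b : X}
    (hab : ¬((a = x ∧ b = y) ∨ (a = y ∧ b = x))) :
    marginOf R₁.rel a b = marginOf R₂.rel a b := by
  have hrel : ∀ i p q, ¬((p = x ∧ q = y) ∨ (p = y ∧ q = x)) → (R₁.rel i p q ↔ R₂.rel i p q) := by
    intro i p q hpq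
    have := congrFun (congrFun (congrFun h i) p) q
    simp only [Profile.remove, eq_iff_iff] at this
    tauto
  have hba : ¬((b = x ∧ a = y) ∨ (b = y ∧ a = x)) := by tauto
  simp only [marginOf, strictPref, hrel _ a b hab, hrel _ b a hba]

theorem marginOf_le_of_forall_strictPref [Fintype V] (R : Profile V X) {x y : X}
    (h : ∀ i, strictPref (R.rel i) x y) (z : X) :
    marginOf R.rel y z ≤ marginOf R.rel x z := by
  classical
  rw [marginOf_eq_sum, marginOf_eq_sum]
  refine Finset.sum_le_sum fun i _ => ?_
  have hwin : strictPref (R.rel i) y z → strictPref (R.rel i) x z := strictPref_trans R i (h i)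
  have hlose : strictPref (R.rel i) z x → strictPref (R.rel i) z y :=
    fun hzx => strictPref_trans R i hzx (h i)
  split_ifs <;> simp_all

theorem marginOf_pos_of_forall_strictPref [Fintype V] [Nonempty V] (R : Profile V X) {x y : X}
    (h : ∀ i, strictPref (R.rel i) x y) : 0 < marginOf R.rel x y := by
  classical
  rw [marginOf_eq_sum]
  refine Finset.sum_pos (fun i _ => ?_) Finset.univ_nonempty
  rw [if_pos (h i), if_neg fun hyx => hyx.2 (h i).1]
  norm_num

end Margins

section Scores

variable {V X : Type*} [Fintype X]

theorem copelandScore_eq_sum (R : Profile V X) (x : X) :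
    copelandScore R x = ∑ z, (marginOf R.rel x z).sign := by
  classical
  simp only [copelandScore, Nat.card_eq_fintype_card, Fintype.card_subtype,
    Finset.natCast_card_filter, marginOf_swap R.rel x, neg_pos, ← Finset.sum_sub_distrib,
    Int.sign_eq_ite]

theorem copelandScore_sub_copelandScore [DecidableEq X] (R : Profile V X) {x y : X} (hxy : x ≠ y) :
    copelandScore R x - copelandScore R y =
      2 * (marginOf R.rel x y).sign +
        ∑ z ∈ ({x, y} : Finset X)ᶜ, ((marginOf R.rel x z).sign - (marginOf R.rel y z).sign) := by
  rw [copelandScore_eq_sum, copelandScore_eq_sum, ← Finset.sum_sub_distrib,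
    ← Finset.sum_compl_add_sum {x, y}, Finset.sum_pair hxy, marginOf_self, marginOf_self,
    marginOf_swap R.rel x y, Int.sign_neg]
  ring

theorem copelandScore_permVoters (R : Profile V X) (τ : Equiv.Perm V) (x : X) :
    copelandScore (R.permVoters τ) x = copelandScore R x := by
  simp only [copelandScore_eq_sum, marginOf_permVoters]

theorem copelandScore_permCands (R : Profile V X) (π : Equiv.Perm X) (x : X) :
    copelandScore (R.permCands π) (π x) = copelandScore R x := by
  rw [copelandScore_eq_sum, copelandScore_eq_sum, ← Equiv.sum_comp π]
  simp only [marginOf_permCands]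

theorem copelandScore_lt_of_forall_strictPref [Fintype V] [Nonempty V] (R : Profile V X)
    {x y : X} (h : ∀ i, strictPref (R.rel i) x y) : copelandScore R y < copelandScore R x := by
  classical
  obtain ⟨i⟩ := ‹Nonempty V›
  have hxy : x ≠ y := by
    rintro rfl
    exact (h i).2 (h i).1
  have hpos := marginOf_pos_of_forall_strictPref R h
  have hrest : 0 ≤ ∑ z ∈ ({x, y} : Finset X)ᶜ,
      ((marginOf R.rel x z).sign - (marginOf R.rel y z).sign) :=
    Finset.sum_nonneg fun z _ =>
      sub_nonneg.2 (Int.sign_mono (marginOf_le_of_forall_strictPref R h z))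
  have := copelandScore_sub_copelandScore R hxy
  rw [Int.sign_eq_one_of_pos hpos] at this
  linarith

theorem copelandScore_sub_le_of_remove_eq {R₁ R₂ : Profile V X} {x y : X}
    (hrem : R₁.remove x y = R₂.remove x y) (hm : marginOf R₁.rel x y ≤ marginOf R₂.rel x y) :
    copelandScore R₁ x - copelandScore R₁ y ≤ copelandScore R₂ x - copelandScore R₂ y := by
  classical
  rcases eq_or_ne x y with rfl | hxy
  · simp
  rw [copelandScore_sub_copelandScore R₁ hxy, copelandScore_sub_copelandScore R₂ hxy]
  have hrest : ∀ z ∈ ({x, y} : Finset X)ᶜ, ∀ w ∈ ({x, y} : Finset X),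
      marginOf R₁.rel w z = marginOf R₂.rel w z := by
    intro z hz w hw
    simp only [Finset.mem_compl, Finset.mem_insert, Finset.mem_singleton] at hz hw
    exact marginOf_eq_of_remove_eq hrem (by tauto)
  rw [Finset.sum_congr rfl fun z hz => by
    rw [hrest z hz x (by simp), hrest z hz y (by simp)]]
  linarith [Int.sign_mono hm]

end Scores

section Copeland

variable {V X : Type*}

theorem strictPref_copeland_iff (R : Profile V X) (x y : X) :
    strictPref (copeland V X R) x y ↔ copelandScore R y < copelandScore R x :=
  lt_iff_le_not_ge.symm

theorem copeland_orderable [Fintype X] : Orderable (copeland V X) := by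
  intro x y
  refine ⟨fun Q₁ Q₂ => marginOf Q₁ x y ≤ marginOf Q₂ x y,
    fun _ _ _ _ _ _ h₁ h₂ => h₁.trans h₂, fun _ _ _ _ => le_total _ _, ?_⟩
  intro R₁ R₂ hlq hrem h₁
  rw [marginOf_restrict, marginOf_restrict] at hlq
  rw [strictPref_copeland_iff] at h₁ ⊢
  linarith [copelandScore_sub_le_of_remove_eq hrem hlq]

end Copeland

section Counterexample

variable {V X : Type*}

def Profile.ofUtility (u : V → X → ℤ) : Profile V X where
  rel i x y := u i y ≤ u i x
  total _ _ _ := le_total _ _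
  trans _ _ _ _ hxy hyz := hyz.trans hxy

theorem strictPref_ofUtility (u : V → X → ℤ) (i : V) (x y : X) :
    strictPref ((Profile.ofUtility u).rel i) x y ↔ u i y < u i x :=
  lt_iff_le_not_ge.symm

theorem marginOf_ofUtility [Fintype V] (u : V → X → ℤ) (x y : X) :
    marginOf (Profile.ofUtility u).rel x y = ∑ i, (u i x - u i y).sign := by
  classical
  simp only [marginOf_eq_sum, strictPref_ofUtility, Int.sign_eq_ite, sub_pos, sub_neg]

theorem marginOf_ofUtility_pair [Fintype V] [DecidableEq V] {v₁ v₂ : V} (hv : v₁ ≠ v₂)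
    (f g : X → ℤ) (x y : X) :
    marginOf (Profile.ofUtility (Pi.single v₁ f + Pi.single v₂ g)).rel x y =
      (f x - f y).sign + (g x - g y).sign := by
  rw [marginOf_ofUtility, Fintype.sum_eq_add v₁ v₂ hv fun i hi => by
    simp [hi.1, hi.2]]
  simp [hv, hv.symm]

theorem restrict_ofUtility_eq {u u' : V → X → ℤ} {a b : X}
    (hab : ∀ i, u i b ≤ u i a ↔ u' i b ≤ u' i a) (hba : ∀ i, u i a ≤ u i b ↔ u' i a ≤ u' i b) :
    (Profile.ofUtility u).restrict a b = (Profile.ofUtility u').restrict a b := by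
  funext i p q
  simp only [Profile.restrict, Profile.ofUtility, eq_iff_iff]
  rcases eq_or_ne p q with rfl | hpq
  · simp
  constructor <;> rintro ⟨hp | hp, hq | hq, h⟩ <;> subst hp hq <;> simp_all

def rank3 [DecidableEq X] (p q r : X) (z : X) : ℤ :=
  if z = p then 3 else if z = q then 2 else if z = r then 1 else 0

theorem copelandScore_sub_copelandScore_of_three [Fintype X] [DecidableEq X] (R : Profile V X)
    {a b c : X} (hab : a ≠ b) (hac : a ≠ c) (hbc : b ≠ c) (h₀ : marginOf R.rel a b = 0)
    (hz : ∀ z, z ≠ a → z ≠ b → z ≠ c → marginOf R.rel a z = marginOf R.rel b z) :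
    copelandScore R a - copelandScore R b =
      (marginOf R.rel a c).sign - (marginOf R.rel b c).sign := by
  rw [copelandScore_sub_copelandScore R hab, h₀, Int.sign_zero, mul_zero, zero_add]
  refine Finset.sum_eq_single_of_mem c (by simp [hac.symm, hbc.symm]) fun z hz' hzc => ?_
  simp only [Finset.mem_compl, Finset.mem_insert, Finset.mem_singleton, not_or] at hz'
  rw [hz z hz'.1 hz'.2 hzc, sub_self]

/-- Everybody but `v₁` and `v₂` is indifferent. Both profiles give `a` and `b` a zero margin, so
`a` and `b` are separated only by their contests against `c`: `a` ties `c` and `b` loses to it in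
the first profile, the other way round in the second. -/
theorem copeland_not_weakIIA [Fintype V] [Fintype X] (hV : 1 < Fintype.card V)
    (hX : 2 < Fintype.card X) : ¬ WeakIIA (copeland V X) := by
  classical
  obtain ⟨v₁, v₂, hv⟩ := Fintype.exists_pair_of_one_lt_card hV
  obtain ⟨a, b, c, hab, hac, hbc⟩ : ∃ a b c : X, a ≠ b ∧ a ≠ c ∧ b ≠ c := by
    obtain ⟨s, -, hs⟩ := Finset.exists_subset_card_eq hX
    obtain ⟨a, b, c, hab, hac, hbc, -⟩ := Finset.card_eq_three.1 hs
    exact ⟨a, b, c, hab, hac, hbc⟩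
  have hdist : a ≠ b ∧ a ≠ c ∧ b ≠ c ∧ b ≠ a ∧ c ≠ a ∧ c ≠ b :=
    ⟨hab, hac, hbc, hab.symm, hac.symm, hbc.symm⟩
  set u : V → X → ℤ := Pi.single v₁ (rank3 a c b) + Pi.single v₂ (rank3 c b a)
  set u' : V → X → ℤ := Pi.single v₁ (rank3 c a b) + Pi.single v₂ (rank3 b c a)
  have hrestrict : (Profile.ofUtility u).restrict a b = (Profile.ofUtility u').restrict a b := by
    apply restrict_ofUtility_eq <;> intro i <;> by_cases h₁ : i = v₁ <;> by_cases h₂ : i = v₂ <;>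
      simp [u, u', rank3, h₁, h₂, hv, hdist]
  have hwin : copelandScore (Profile.ofUtility u) b < copelandScore (Profile.ofUtility u) a := by
    have := copelandScore_sub_copelandScore_of_three (Profile.ofUtility u) hab hac hbc
      (by simp [u, marginOf_ofUtility_pair hv, rank3, hdist, Int.sign_eq_one_of_pos])
      (fun z hza hzb hzc => by
        simp [u, marginOf_ofUtility_pair hv, rank3, hdist, Int.sign_eq_one_of_pos, hza, hzb, hzc])
    simp [u, marginOf_ofUtility_pair hv, rank3, hdist, Int.sign_eq_one_of_pos] at this
    linarith
  have hlose : copelandScore (Profile.ofUtility u') a < copelandScore (Profile.ofUtility u') b := by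
    have := copelandScore_sub_copelandScore_of_three (Profile.ofUtility u') hab hac hbc
      (by simp [u', marginOf_ofUtility_pair hv, rank3, hdist, Int.sign_eq_one_of_pos])
      (fun z hza hzb hzc => by
        simp [u', marginOf_ofUtility_pair hv, rank3, hdist, Int.sign_eq_one_of_pos, hza, hzb, hzc])
    simp [u', marginOf_ofUtility_pair hv, rank3, hdist, Int.sign_eq_one_of_pos] at this
    linarith
  exact fun hIIA => hIIA a b _ _ hrestrict ((strictPref_copeland_iff _ a b).2 hwin)
    ((strictPref_copeland_iff _ b a).2 hlose)

end Counterexample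

/-- The Copeland CCR is a transitive and complete SWF satisfying anonymity, neutrality,
Pareto, and orderability, but it violates weak IIA (given ≥ 2 voters and ≥ 3 candidates). -/
theorem copeland_properties {V X : Type*} [Fintype V] [Fintype X]
    (h2 : 2 ≤ Fintype.card V) (h3 : 3 ≤ Fintype.card X) :
    (∀ (R : Profile V X) (x y z : X),
        copeland V X R x y → copeland V X R y z → copeland V X R x z) ∧
    (∀ (R : Profile V X) (x y : X), copeland V X R x y ∨ copeland V X R y x) ∧
    (∀ (R : Profile V X) (τ : Equiv.Perm V) (x y : X),
        copeland V X (R.permVoters τ) x y ↔ copeland V X R x y) ∧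
    (∀ (R : Profile V X) (π : Equiv.Perm X) (x y : X),
        copeland V X (R.permCands π) (π x) (π y) ↔ copeland V X R x y) ∧
    (∀ (R : Profile V X) (x y : X),
        (∀ i, strictPref (R.rel i) x y) → strictPref (copeland V X R) x y) ∧
    Orderable (copeland V X) ∧
    ¬ WeakIIA (copeland V X) := by
  have : Nonempty V := Fintype.card_pos_iff.1 (by omega)
  refine ⟨fun R x y z hxy hyz => hyz.trans hxy, fun R x y => le_total _ _, ?_, ?_, ?_,
    copeland_orderable, copeland_not_weakIIA h2 h3⟩
  · intro R τ x y
    simp only [copeland, copelandScore_permVoters]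
  · intro R π x y
    simp only [copeland, copelandScore_permCands]
  · intro R x y h
    exact (strictPref_copeland_iff R x y).2 (copelandScore_lt_of_forall_strictPref R h)
end

section
/- The Gillies Covering CCR f_cov is transitive: for every profile R, the relation f_cov(R) is transitive. -/
/-- Majority preference: x is majority preferred to y. -/
noncomputable def majPref {V X : Type*} (R : Profile V X) (x y : X) : Prop :=
  0 < marginOf R.rel x y

/-- The strict Gillies covering relation. -/
noncomputable def Pcov {V X : Type*} (R : Profile V X) (x y : X) : Prop :=
  majPref R x y ∧ ∀ v, majPref R v x → majPref R v y

/-- Covering indifference: x and y relate by majority preference to all candidates alike. -/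
noncomputable def Icov {V X : Type*} (R : Profile V X) (x y : X) : Prop :=
  ∀ v, (majPref R v x ↔ majPref R v y) ∧ (majPref R x v ↔ majPref R y v)

/-- The Gillies Covering CCR. -/
noncomputable def fcov {V X : Type*} : CCR V X :=
  fun R x y => Pcov R x y ∨ Icov R x y

section Covering

variable {V X : Type*} {R : Profile V X} {x y z : X}

theorem Pcov.trans (hxy : Pcov R x y) (hyz : Pcov R y z) : Pcov R x z :=
  ⟨hyz.2 x hxy.1, fun v hv => hyz.2 v (hxy.2 v hv)⟩

theorem Icov.trans (hxy : Icov R x y) (hyz : Icov R y z) : Icov R x z :=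
  fun v => ⟨(hxy v).1.trans (hyz v).1, (hxy v).2.trans (hyz v).2⟩

theorem Icov.trans_Pcov (hxy : Icov R x y) (hyz : Pcov R y z) : Pcov R x z :=
  ⟨(hxy z).2.mpr hyz.1, fun v hv => hyz.2 v ((hxy v).1.mp hv)⟩

theorem Pcov.trans_Icov (hxy : Pcov R x y) (hyz : Icov R y z) : Pcov R x z :=
  ⟨(hyz x).1.mp hxy.1, fun v hv => (hyz v).1.mp (hxy.2 v hv)⟩

end Covering

/-- The Gillies Covering CCR is transitive. -/
theorem fcov_transitive {V X : Type*} (R : Profile V X) (x y z : X)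
    (hxy : fcov R x y) (hyz : fcov R y z) : fcov R x z := by
  rcases hxy with hxy | hxy <;> rcases hyz with hyz | hyz
  · exact Or.inl (hxy.trans hyz)
  · exact Or.inl (hxy.trans_Icov hyz)
  · exact Or.inl (hxy.trans_Pcov hyz)
  · exact Or.inr (hxy.trans hyz)
end

section
/- Every Split Cycle CCR is AS rationalizable over (ℤ,+,≤) with Advantage(x,y,R|_{x,y}) = Margin(x,y) and Standard(x,y,R^{-x,y}) = the maximum splitting number over majority paths from y to x in R^{-x,y} (taken to be 0 if there are no such paths). -/
/-- A majority cycle (represented by its list of distinct vertices, with edges wrapping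
around) for a margin function M. -/
def IsMajCycle {X : Type*} (M : X → X → ℤ) (l : List X) : Prop :=
  2 ≤ l.length ∧ l.Nodup ∧ ∀ p ∈ l.zip (l.rotate 1), 0 < M p.1 p.2

/-- The splitting number of a majority cycle: the smallest margin along the cycle. -/
noncomputable def cycleSplit {X : Type*} (M : X → X → ℤ) (l : List X) : ℤ :=
  (((l.zip (l.rotate 1)).map (fun p => M p.1 p.2)).min?).getD 0

/-- A Split Cycle CCR: x strictly socially preferred to y iff the margin of x over y is
positive and exceeds the splitting number of every majority cycle containing x and y. -/
def IsSplitCycleCCR {V X : Type*} (f : CCR V X) : Prop :=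
  ∀ (R : Profile V X) (x y : X),
    strictPref (f R) x y ↔
      (marginOf R.rel y x < marginOf R.rel x y ∧
        ∀ l : List X, IsMajCycle (marginOf R.rel) l → x ∈ l → y ∈ l →
          cycleSplit (marginOf R.rel) l < marginOf R.rel x y)

/-- A majority path from y to x for a margin function M. -/
def IsMajPath {X : Type*} (M : X → X → ℤ) (y x : X) (l : List X) : Prop :=
  2 ≤ l.length ∧ l.head? = some y ∧ l.getLast? = some x ∧
  l.dropLast.Nodup ∧ l.tail.Nodup ∧ l.Chain' (fun a b => 0 < M a b)

/-- The splitting number of a majority path: the smallest margin along the path. -/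
noncomputable def pathSplit {X : Type*} (M : X → X → ℤ) (l : List X) : ℤ :=
  (((l.zip l.tail).map (fun p => M p.1 p.2)).min?).getD 0

namespace List

variable {α : Type*} {r : α → α → Prop}

theorem forall_mem_zip_tail_iff_isChain {l : List α} :
    (∀ p ∈ l.zip l.tail, r p.1 p.2) ↔ l.IsChain r := by
  induction l with
  | nil => simp
  | cons a l ih =>
    cases l with
    | nil => simp
    | cons b l => simp_all [isChain_cons_cons]

theorem forall_mem_zip_rotate_one_iff_cycleChain {l : List α} :
    (∀ p ∈ l.zip (l.rotate 1), r p.1 p.2) ↔ Cycle.Chain r (l : Cycle α) := by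
  cases l with
  | nil => simp
  | cons a l =>
    have : (a :: l).zip (l ++ [a]) = (a :: (l ++ [a])).zip (l ++ [a]) := by
      have h := zip_append (l₁ := a :: l) (r₁ := [a]) (l₂ := l ++ [a]) (r₂ := ([] : List α))
        (by simp)
      simpa using h.symm
    rw [Cycle.chain_coe_cons, ← forall_mem_zip_tail_iff_isChain, rotate_cons_succ, rotate_zero,
      tail_cons, this]

theorem le_min?_getD_iff [LinearOrder α] {L : List α} (hL : L ≠ []) {m d : α} :
    m ≤ L.min?.getD d ↔ ∀ b ∈ L, m ≤ b := by
  obtain ⟨a, ha⟩ := Option.isSome_iff_exists.1 (isSome_min?_of_ne_nil hL)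
  rw [ha, Option.getD_some]
  exact le_min?_iff ha

end List

section Margins

variable {V X : Type*}

theorem marginOf_neg (p : V → X → X → Prop) (a b : X) : marginOf p a b = -marginOf p b a := by
  unfold marginOf; ring

theorem marginOf_remove_eq (R : Profile V X) {x y a b : X}
    (h : ¬((a = x ∧ b = y) ∨ (a = y ∧ b = x))) :
    marginOf (R.remove x y) a b = marginOf R.rel a b := by
  unfold marginOf
  congr 2 <;>
    exact Nat.card_congr (Equiv.subtypeEquivRight fun i => by
      simp only [strictPref, Profile.remove]; tauto)

theorem marginOf_remove_eq_zero (R : Profile V X) {x y a b : X}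
    (h : (a = x ∧ b = y) ∨ (a = y ∧ b = x)) : marginOf (R.remove x y) a b = 0 := by
  have hab (i : V) : ¬R.remove x y i a b := fun hi => hi.2 h
  have hba (i : V) : ¬R.remove x y i b a := fun hi => hi.2 (by tauto)
  simp [marginOf, strictPref, hab, hba]

end Margins

section Splits

variable {X : Type*} {M : X → X → ℤ} {l : List X} {m : ℤ}

theorem le_pathSplit_iff (hl : 2 ≤ l.length) :
    m ≤ pathSplit M l ↔ l.IsChain (fun a b => m ≤ M a b) := by
  have hne : (l.zip l.tail).map (fun p => M p.1 p.2) ≠ [] := by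
    apply List.ne_nil_of_length_pos
    simp only [List.length_map, List.length_zip, List.length_tail]
    omega
  rw [pathSplit, List.le_min?_getD_iff hne, List.forall_mem_map]
  exact List.forall_mem_zip_tail_iff_isChain (r := fun a b => m ≤ M a b)

theorem le_cycleSplit_iff (hl : l ≠ []) :
    m ≤ cycleSplit M l ↔ Cycle.Chain (fun a b => m ≤ M a b) (l : Cycle X) := by
  have hne : (l.zip (l.rotate 1)).map (fun p => M p.1 p.2) ≠ [] := by
    apply List.ne_nil_of_length_pos
    simpa using List.length_pos_of_ne_nil hl
  rw [cycleSplit, List.le_min?_getD_iff hne, List.forall_mem_map]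
  exact List.forall_mem_zip_rotate_one_iff_cycleChain (r := fun a b => m ≤ M a b)

theorem isMajCycle_iff : IsMajCycle M l ↔
    2 ≤ l.length ∧ l.Nodup ∧ Cycle.Chain (fun a b => 0 < M a b) (l : Cycle X) := by
  rw [IsMajCycle, List.forall_mem_zip_rotate_one_iff_cycleChain (r := fun a b => 0 < M a b)]

end Splits

section MajPaths

variable {X : Type*} {M : X → X → ℤ} {x y : X} {l : List X}

theorem IsMajPath.nodup (h : IsMajPath M y x l) (hxy : x ≠ y) : l.Nodup := by
  obtain ⟨hlen, hhead, hlast, hdrop, htail, -⟩ := h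
  obtain ⟨ys, rfl⟩ := List.getLast?_eq_some_iff.1 hlast
  obtain ⟨s, rfl⟩ : ∃ s, ys = y :: s := by
    cases ys with
    | nil => simp at hlen
    | cons a s => exact ⟨s, by simpa using hhead⟩
  rw [List.dropLast_concat] at hdrop
  rw [List.cons_append, List.tail_cons] at htail
  simp only [List.cons_append, List.nodup_cons, List.mem_append, List.mem_singleton]
  exact ⟨by rintro (h | rfl); exacts [(List.nodup_cons.1 hdrop).1 h, hxy rfl], htail⟩

theorem IsMajPath.pathSplit_pos (h : IsMajPath M y x l) : 0 < pathSplit M l :=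
  (le_pathSplit_iff h.1).2 (h.2.2.2.2.2.imp fun _ _ hab => hab)

theorem finite_setOf_isMajPath [Finite X] (M : X → X → ℤ) (y x : X) :
    {l : List X | IsMajPath M y x l}.Finite := by
  have := Fintype.ofFinite X
  refine (List.finite_length_le X (Fintype.card X + 1)).subset fun l hl => ?_
  have := hl.2.2.2.1.length_le_card
  simp only [List.length_dropLast] at this
  show l.length ≤ Fintype.card X + 1
  omega

end MajPaths

section MaxPathSplit

variable {X : Type*} (M : X → X → ℤ) (y x : X)

noncomputable def maxPathSplit : ℤ :=
  sSup (pathSplit M '' {l | IsMajPath M y x l})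

theorem maxPathSplit_eq_zero (h : ¬∃ l, IsMajPath M y x l) : maxPathSplit M y x = 0 := by
  have hempty : {l | IsMajPath M y x l} = ∅ := Set.eq_empty_of_forall_notMem fun l hl => h ⟨l, hl⟩
  rw [maxPathSplit, hempty, Set.image_empty, Int.csSup_empty]

variable [Finite X] {M y x}

theorem le_maxPathSplit {l : List X} (hl : IsMajPath M y x l) :
    pathSplit M l ≤ maxPathSplit M y x :=
  le_csSup ((finite_setOf_isMajPath M y x).image _).bddAbove ⟨l, hl, rfl⟩

theorem exists_pathSplit_eq_maxPathSplit (h : ∃ l, IsMajPath M y x l) :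
    ∃ l, IsMajPath M y x l ∧ pathSplit M l = maxPathSplit M y x := by
  obtain ⟨l, hl⟩ := h
  exact (Set.Nonempty.image _ ⟨l, hl⟩).csSup_mem ((finite_setOf_isMajPath M y x).image _)

variable (M y x)

theorem maxPathSplit_nonneg : 0 ≤ maxPathSplit M y x := by
  by_cases h : ∃ l, IsMajPath M y x l
  · obtain ⟨l, hl, heq⟩ := exists_pathSplit_eq_maxPathSplit h
    exact heq ▸ hl.pathSplit_pos.le
  · exact (maxPathSplit_eq_zero M y x h).ge

theorem maxPathSplit_lt_iff {m : ℤ} (hm : 0 < m) :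
    maxPathSplit M y x < m ↔ ∀ l, IsMajPath M y x l → pathSplit M l < m := by
  refine ⟨fun h l hl => (le_maxPathSplit hl).trans_lt h, fun h => ?_⟩
  by_cases hex : ∃ l, IsMajPath M y x l
  · obtain ⟨l, hl, heq⟩ := exists_pathSplit_eq_maxPathSplit hex
    exact heq ▸ h l hl
  · exact (maxPathSplit_eq_zero M y x hex).trans_lt hm

end MaxPathSplit

section DeleteEdge

variable {X : Type*} {M M' : X → X → ℤ} {x y : X}

theorem IsMajPath.isMajCycle_of_deleteEdge
    (hM' : ∀ a b, ¬((a = x ∧ b = y) ∨ (a = y ∧ b = x)) → M' a b = M a b) (hM'yx : M' y x = 0)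
    (hxy : x ≠ y) (hm : 0 < M x y) {l : List X} (hl : IsMajPath M' y x l)
    (hsplit : M x y ≤ pathSplit M' l) :
    IsMajCycle M l ∧ x ∈ l ∧ y ∈ l ∧ M x y ≤ cycleSplit M l := by
  have hr (a b : X) (hab : M x y ≤ M' a b) : M x y ≤ M a b := by
    by_cases hp : (a = x ∧ b = y) ∨ (a = y ∧ b = x)
    · rcases hp with ⟨rfl, rfl⟩ | ⟨rfl, rfl⟩
      · exact le_rfl
      · omega
    · rwa [← hM' a b hp]
  obtain ⟨t, rfl⟩ := List.head?_eq_some_iff.1 hl.2.1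
  have hchain : Cycle.Chain (fun a b => M x y ≤ M a b) (y :: t : Cycle X) := by
    rw [Cycle.chain_coe_cons, ← List.cons_append, List.isChain_append]
    refine ⟨((le_pathSplit_iff hl.1).1 hsplit).imp hr, List.isChain_singleton _, ?_⟩
    simp [hl.2.2.1]
  exact ⟨isMajCycle_iff.2 ⟨hl.1, hl.nodup hxy, hchain.imp fun a b h => hm.trans_le h⟩,
    List.mem_of_getLast? hl.2.2.1, List.mem_cons_self ..,
    (le_cycleSplit_iff (by simp)).2 hchain⟩

theorem IsMajCycle.exists_isMajPath_deleteEdge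
    (hM : ∀ a b, M a b = -M b a)
    (hM' : ∀ a b, ¬((a = x ∧ b = y) ∨ (a = y ∧ b = x)) → M' a b = M a b)
    (hxy : x ≠ y) (hm : 0 < M x y) {c : List X} (hc : IsMajCycle M c) (hx : x ∈ c) (hy : y ∈ c)
    (hsplit : M x y ≤ cycleSplit M c) :
    ∃ l, IsMajPath M' y x l ∧ M x y ≤ pathSplit M' l := by
  obtain ⟨s, t, rfl⟩ := List.append_of_mem hy
  have hrot : (s ++ y :: t) ~r (y :: (t ++ s)) := List.isRotated_append
  have hchain := (le_cycleSplit_iff (by simp)).1 hsplit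
  rw [Cycle.coe_eq_coe.2 hrot, Cycle.chain_coe_cons] at hchain
  have hnd := hrot.nodup_iff.1 hc.2.1
  obtain ⟨u, w, huw⟩ : ∃ u w, t ++ s = u ++ x :: w := by
    refine List.append_of_mem ?_
    simpa [hxy] using hrot.mem_iff.1 hx
  rw [huw] at hchain hnd
  have hpnd : (y :: u ++ [x]).Nodup := hnd.sublist (List.IsPrefix.sublist ⟨w, by simp⟩)
  have hxu : x ∉ y :: u := by
    rw [List.nodup_append] at hpnd
    exact fun h => hpnd.2.2 x h x (List.mem_singleton_self x) rfl
  have hr (a b : X) (ha : a ∈ y :: u) (hab : M x y ≤ M a b) : M x y ≤ M' a b := by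
    rw [hM' a b]
    · exact hab
    rintro (⟨rfl, -⟩ | ⟨hay, hbx⟩)
    · exact hxu ha
    · rw [hay, hbx, hM y x] at hab
      omega
  have hpchain : (y :: u ++ [x]).IsChain (fun a b => M x y ≤ M' a b) := by
    have := hchain.prefix (l₁ := y :: u ++ [x]) ⟨w ++ [y], by simp⟩
    rw [List.isChain_append] at this ⊢
    exact ⟨this.1.imp_of_mem_imp fun a b ha _ => hr a b ha, List.isChain_singleton _,
      fun a ha b hb => hr a b (List.mem_of_getLast? ha) (this.2.2 a ha b hb)⟩
  refine ⟨y :: u ++ [x], ⟨by simp, rfl, List.getLast?_concat .., ?_, ?_,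
    hpchain.imp fun a b h => hm.trans_le h⟩, (le_pathSplit_iff (by simp)).2 hpchain⟩
  exacts [hpnd.sublist (List.dropLast_sublist _), hpnd.sublist (List.tail_sublist _)]

theorem forall_cycleSplit_lt_iff_forall_pathSplit_lt
    (hM : ∀ a b, M a b = -M b a)
    (hM' : ∀ a b, ¬((a = x ∧ b = y) ∨ (a = y ∧ b = x)) → M' a b = M a b) (hM'yx : M' y x = 0)
    (hm : 0 < M x y) :
    (∀ c, IsMajCycle M c → x ∈ c → y ∈ c → cycleSplit M c < M x y) ↔
      ∀ l, IsMajPath M' y x l → pathSplit M' l < M x y := by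
  have hxy : x ≠ y := by
    rintro rfl
    have := hM x x
    omega
  constructor
  · intro h l hl
    by_contra! hle
    obtain ⟨hc, hx, hy, hsplit⟩ := hl.isMajCycle_of_deleteEdge hM' hM'yx hxy hm hle
    exact (h l hc hx hy).not_ge hsplit
  · intro h c hc hx hy
    by_contra! hle
    obtain ⟨l, hl, hsplit⟩ := hc.exists_isMajPath_deleteEdge hM hM' hxy hm hx hy hle
    exact (h l hl).not_ge hsplit

end DeleteEdge

theorem splitcycle_as_rationalizable_general {V X : Type*} [Finite X] (f : CCR V X)
    (hf : IsSplitCycleCCR f) :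
    (∀ (x y : X) (R : Profile V X),
        marginOf (R.restrict x y) x y = - marginOf (R.restrict x y) y x) ∧
    ∃ Std : X → X → (V → X → X → Prop) → ℤ,
      (∀ (x y : X) (R : Profile V X), 0 ≤ Std x y (R.remove x y)) ∧
      (∀ (x y : X) (R : Profile V X),
        (∀ l : List X, IsMajPath (marginOf (R.remove x y)) y x l →
          pathSplit (marginOf (R.remove x y)) l ≤ Std x y (R.remove x y)) ∧
        ((∃ l : List X, IsMajPath (marginOf (R.remove x y)) y x l ∧
            pathSplit (marginOf (R.remove x y)) l = Std x y (R.remove x y)) ∨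
          ((¬ ∃ l : List X, IsMajPath (marginOf (R.remove x y)) y x l) ∧
            Std x y (R.remove x y) = 0))) ∧
      (∀ (x y : X) (R : Profile V X),
        strictPref (f R) x y ↔
          Std x y (R.remove x y) < marginOf (R.restrict x y) x y) := by
  refine ⟨fun x y R => marginOf_neg _ x y, fun x y q => maxPathSplit (marginOf q) y x,
    fun x y R => maxPathSplit_nonneg .., fun x y R => ⟨fun l => le_maxPathSplit, ?_⟩,
    fun x y R => ?_⟩
  · by_cases h : ∃ l, IsMajPath (marginOf (R.remove x y)) y x l
    · exact .inl (exists_pathSplit_eq_maxPathSplit h)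
    · exact .inr ⟨h, maxPathSplit_eq_zero _ y x h⟩
  · rw [hf R x y, marginOf_restrict, marginOf_neg R.rel y x, neg_lt_self_iff]
    by_cases hm : 0 < marginOf R.rel x y
    · rw [maxPathSplit_lt_iff _ _ _ hm, ← forall_cycleSplit_lt_iff_forall_pathSplit_lt
        (marginOf_neg _) (fun _ _ => marginOf_remove_eq R)
        (marginOf_remove_eq_zero R (.inr ⟨rfl, rfl⟩)) hm]
      exact and_iff_right hm
    · exact iff_of_false (fun h => hm h.1) fun h => hm ((maxPathSplit_nonneg ..).trans_lt h)

/-- Every Split Cycle CCR is AS rationalizable over (ℤ,+,≤) with advantage the margin from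
the restricted profile and standard the maximum splitting number over majority paths from
y to x in R^{-x,y} (0 if there are no such paths). -/
theorem splitcycle_as_rationalizable {V X : Type*} [Finite V] [Finite X] (f : CCR V X)
    (hf : IsSplitCycleCCR f) :
    (∀ (x y : X) (R : Profile V X),
        marginOf (R.restrict x y) x y = - marginOf (R.restrict x y) y x) ∧
    ∃ Std : X → X → (V → X → X → Prop) → ℤ,
      (∀ (x y : X) (R : Profile V X), 0 ≤ Std x y (R.remove x y)) ∧
      (∀ (x y : X) (R : Profile V X),
        (∀ l : List X, IsMajPath (marginOf (R.remove x y)) y x l →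
          pathSplit (marginOf (R.remove x y)) l ≤ Std x y (R.remove x y)) ∧
        ((∃ l : List X, IsMajPath (marginOf (R.remove x y)) y x l ∧
            pathSplit (marginOf (R.remove x y)) l = Std x y (R.remove x y)) ∨
          ((¬ ∃ l : List X, IsMajPath (marginOf (R.remove x y)) y x l) ∧
            Std x y (R.remove x y) = 0))) ∧
      (∀ (x y : X) (R : Profile V X),
        strictPref (f R) x y ↔
          Std x y (R.remove x y) < marginOf (R.restrict x y) x y) :=
  splitcycle_as_rationalizable_general f hf
end

section
/- If R is a quasi-transitive binary relation (P(R) is transitive) on a finite set X, then the maximal-element choice function M(Y,R) = {x ∈ Y : no y ∈ Y with yP(R)x} satisfies path independence: for all nonempty Y1, Y2 ⊆ X, M(Y1 ∪ Y2, R) = M(M(Y1,R) ∪ M(Y2,R), R). -/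
/-- Maximal-element choice from a set. -/
def Mchoice {X : Type*} (R : X → X → Prop) (Y : Set X) : Set X :=
  {x ∈ Y | ∀ y ∈ Y, ¬ strictPref R y x}

/-!
On a finite set a transitive, irreflexive relation is well-founded, so whenever some element
of `Y` strictly beats `x`, a maximal element of `Y` beats `x` as well: take a `P(R)`-maximal
element among those beating `x` and use transitivity of `P(R)`. Hence passing from `Y₁ ∪ Y₂`
to `M(Y₁) ∪ M(Y₂)` discards no element that could defeat a candidate, while the reverse
inclusion only needs that maximality is inherited by subsets.
-/

section

variable {X : Type*} {R : X → X → Prop}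

theorem strictPref_irrefl (x : X) : ¬ strictPref R x x := fun h => h.2 h.1

theorem Mchoice_subset (Y : Set X) : Mchoice R Y ⊆ Y := fun _ hx => hx.1

instance : Std.Irrefl (strictPref R) := ⟨strictPref_irrefl⟩

theorem wellFounded_strictPref [Finite X] [IsTrans X (strictPref R)] :
    WellFounded (strictPref R) :=
  Finite.wellFounded_of_trans_of_irrefl _

theorem Mchoice_inter_subset_of_subset {Y Z : Set X} (hYZ : Y ⊆ Z) :
    Mchoice R Z ∩ Y ⊆ Mchoice R Y :=
  fun _ ⟨hxZ, hxY⟩ => ⟨hxY, fun y hy => hxZ.2 y (hYZ hy)⟩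

theorem exists_mem_Mchoice_strictPref [IsTrans X (strictPref R)]
    (hwf : WellFounded (strictPref R)) {Y : Set X} {x y : X} (hy : y ∈ Y)
    (hyx : strictPref R y x) : ∃ m ∈ Mchoice R Y, strictPref R m x := by
  obtain ⟨m, ⟨hmY, hmx⟩, hmin⟩ := hwf.has_min {m | m ∈ Y ∧ strictPref R m x} ⟨y, hy, hyx⟩
  exact ⟨m, ⟨hmY, fun z hz hzm => hmin z ⟨hz, _root_.trans hzm hmx⟩ hzm⟩, hmx⟩

theorem Mchoice_union_subset_Mchoice_union_Mchoice (Y₁ Y₂ : Set X) :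
    Mchoice R (Y₁ ∪ Y₂) ⊆ Mchoice R (Mchoice R Y₁ ∪ Mchoice R Y₂) := by
  intro x hx
  have hxM : x ∈ Mchoice R Y₁ ∪ Mchoice R Y₂ := by
    rcases hx.1 with hx₁ | hx₂
    · exact Or.inl (Mchoice_inter_subset_of_subset Set.subset_union_left ⟨hx, hx₁⟩)
    · exact Or.inr (Mchoice_inter_subset_of_subset Set.subset_union_right ⟨hx, hx₂⟩)
  exact Mchoice_inter_subset_of_subset
    (Set.union_subset_union (Mchoice_subset Y₁) (Mchoice_subset Y₂)) ⟨hx, hxM⟩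

theorem Mchoice_union_Mchoice_subset_Mchoice_union [IsTrans X (strictPref R)]
    (hwf : WellFounded (strictPref R)) (Y₁ Y₂ : Set X) :
    Mchoice R (Mchoice R Y₁ ∪ Mchoice R Y₂) ⊆ Mchoice R (Y₁ ∪ Y₂) := by
  rintro x ⟨hxM, hxmax⟩
  refine ⟨Set.union_subset_union (Mchoice_subset Y₁) (Mchoice_subset Y₂) hxM,
    fun y hy hyx => ?_⟩
  rcases hy with hy₁ | hy₂
  · obtain ⟨m, hm, hmx⟩ := exists_mem_Mchoice_strictPref hwf hy₁ hyx
    exact hxmax m (Or.inl hm) hmx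
  · obtain ⟨m, hm, hmx⟩ := exists_mem_Mchoice_strictPref hwf hy₂ hyx
    exact hxmax m (Or.inr hm) hmx

end

/-- If R is quasi-transitive on a finite set, then maximal-element choice satisfies path
independence. -/
theorem Mchoice_path_independent {X : Type*} [Finite X] (R : X → X → Prop)
    (hq : ∀ x y z, strictPref R x y → strictPref R y z → strictPref R x z) :
    ∀ Y₁ Y₂ : Set X, Y₁.Nonempty → Y₂.Nonempty →
      Mchoice R (Y₁ ∪ Y₂) = Mchoice R (Mchoice R Y₁ ∪ Mchoice R Y₂) := by
  intro Y₁ Y₂ _ _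
  have : IsTrans X (strictPref R) := ⟨hq⟩
  exact (Mchoice_union_subset_Mchoice_union_Mchoice Y₁ Y₂).antisymm
    (Mchoice_union_Mchoice_subset_Mchoice_union wellFounded_strictPref Y₁ Y₂)
end
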